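/- For every m ≥ 2, the generating function G(x,y) = Σ g_{n,k} y^k x^n, where g_{n,k} counts Dyck paths of semilength n with k up steps at height h ≡ 0 (mod m), satisfies the finite continued-fraction equation G = 1/(1 - x/(1 - x/(⋯/(1 - x/(1 - x·y·G))))) with m levels, where only the innermost x carries the weight y. -/

import Mathlib

/-- A Dyck path of semilength `n`, encoded as a list of booleans where
`true` is an up step `(1,1)` and `false` is a down step `(1,-1)`;
the path never goes below the x-axis. -/
def IsDyckPath (n : ℕ) (p : List Bool) : Prop :=
  p.length = 2 * n ∧ p.count true = n ∧
  ∀ i, (p.take i).count false ≤ (p.take i).count true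

/-- The height of the `i`-th step: the y-coordinate reached after step `i`.
For an up step this is the height `h` such that the step rises from `y = h-1` to `y = h`. -/
def stepHeight (p : List Bool) (i : ℕ) : ℕ :=
  (p.take (i + 1)).count true - (p.take (i + 1)).count false

/-- The number of up steps of `p` at height `h` with `h ≡ c (mod m)`. -/
def upStepsMod (m c : ℕ) (p : List Bool) : ℕ :=
  ((Finset.range p.length).filter
    (fun i => p.getD i false = true ∧ stepHeight p i % m = c)).card


open MvPowerSeries in
/-- `Gm m` is the generating function `Σ g_{n,k} y^k x^n` where `g_{n,k}` is the number
of Dyck paths of semilength `n` with exactly `k` up steps at height `h ≡ 0 (mod m)`;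
`X 0` is `x` and `X 1` is `y`. -/
noncomputable def Gm (m : ℕ) : MvPowerSeries (Fin 2) ℚ :=
  fun d => (Nat.card {p : List Bool // IsDyckPath (d 0) p ∧ upStepsMod m 0 p = d 1} : ℚ)

open MvPowerSeries in
/-- `cfDen G i` is the `(i+1)`-level continued-fraction denominator
`1 - x/(1 - x/(⋯/(1 - x·y·G)))`: the innermost denominator is `1 - x·y·G` and each
further level is `1 - x/(previous level)`. -/
noncomputable def cfDen (G : MvPowerSeries (Fin 2) ℚ) : ℕ → MvPowerSeries (Fin 2) ℚ
  | 0 => 1 - X 0 * X 1 * G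
  | i + 1 => 1 - X 0 * (cfDen G i)⁻¹

/-!
Track heights modulo `m`. Let `F_h` count Dyck paths by semilength (`x`) and by the up steps
that end at a height `≡ 0 (mod m)` (`y`), when the path is started at height `h` modulo `m`.
Cutting a nonempty path at its first return, `U p₁ D p₂`, the first up step ends at `h + 1`, `p₁`
starts at `h + 1` and `p₂` at `h`, so `F_h = 1 + x·y^[h+1=0]·F_{h+1}·F_h`, i.e.
`F_h = 1/(1 - x·y^[h+1=0]·F_{h+1})`. Unrolling from `F_{-1} = 1/(1 - x·y·F_0)` through
`F_{-2}, …, F_{-m} = F_0` gives the `m`-level continued fraction, and `G = F_0`.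
-/

open MvPowerSeries Finset.HasAntidiagonal

section GenFun

variable {α β σ R : Type*} [Semiring R]

/-- Only meaningful when every fibre `{a // w a = d}` is finite: `Nat.card` of an infinite type
is `0`. -/
noncomputable def genFun (w : α → σ →₀ ℕ) : MvPowerSeries σ R :=
  fun d => Nat.card {a // w a = d}

theorem coeff_genFun (w : α → σ →₀ ℕ) (d : σ →₀ ℕ) :
    coeff d (genFun w : MvPowerSeries σ R) = Nat.card {a // w a = d} := rfl

theorem genFun_comp_equiv (e : α ≃ β) (w : β → σ →₀ ℕ) :
    (genFun (w ∘ e) : MvPowerSeries σ R) = genFun w :=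
  ext fun _ => congrArg Nat.cast (Nat.card_congr (e.subtypeEquiv fun _ => Iff.rfl))

theorem genFun_add_const (w : α → σ →₀ ℕ) (s : σ →₀ ℕ) :
    (genFun (fun a => w a + s) : MvPowerSeries σ R) = monomial s 1 * genFun w := by
  ext d
  rw [coeff_monomial_mul, one_mul, coeff_genFun, coeff_genFun]
  split_ifs with hs
  · exact congrArg Nat.cast (Nat.card_congr
      (Equiv.subtypeEquivRight fun a => (eq_tsub_iff_add_eq_of_le hs).symm))
  · have : IsEmpty {a // w a + s = d} := ⟨fun a => hs (a.2 ▸ le_add_self)⟩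
    simp

theorem finite_fiber_add_const (w : α → σ →₀ ℕ) [∀ d, Finite {a // w a = d}] (s d : σ →₀ ℕ) :
    Finite {a // w a + s = d} :=
  Finite.of_injective (fun a => (⟨a.1, eq_tsub_of_add_eq a.2⟩ : {a // w a = d - s}))
    fun _ _ h => Subtype.ext (by simpa using h)

def fiberProdEquiv [DecidableEq σ] (w₁ : α → σ →₀ ℕ) (w₂ : β → σ →₀ ℕ) (d : σ →₀ ℕ) :
    {x : α × β // w₁ x.1 + w₂ x.2 = d} ≃
      Σ uv : antidiagonal d, {a // w₁ a = uv.1.1} × {b // w₂ b = uv.1.2} where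
  toFun x := ⟨⟨(w₁ x.1.1, w₂ x.1.2), mem_antidiagonal.2 x.2⟩, ⟨x.1.1, rfl⟩, ⟨x.1.2, rfl⟩⟩
  invFun y := ⟨(y.2.1.1, y.2.2.1), by rw [y.2.1.2, y.2.2.2]; exact mem_antidiagonal.1 y.1.2⟩
  left_inv _ := rfl
  right_inv := by
    rintro ⟨⟨⟨u, v⟩, huv⟩, ⟨a, ha : w₁ a = u⟩, ⟨b, hb : w₂ b = v⟩⟩
    subst ha hb
    rfl

theorem finite_fiber_prod (w₁ : α → σ →₀ ℕ) (w₂ : β → σ →₀ ℕ) [∀ d, Finite {a // w₁ a = d}]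
    [∀ d, Finite {b // w₂ b = d}] (d : σ →₀ ℕ) : Finite {x : α × β // w₁ x.1 + w₂ x.2 = d} := by
  classical
  exact Finite.of_equiv _ (fiberProdEquiv w₁ w₂ d).symm

theorem genFun_prod (w₁ : α → σ →₀ ℕ) (w₂ : β → σ →₀ ℕ) [∀ d, Finite {a // w₁ a = d}]
    [∀ d, Finite {b // w₂ b = d}] :
    (genFun (fun x : α × β => w₁ x.1 + w₂ x.2) : MvPowerSeries σ R) = genFun w₁ * genFun w₂ := by
  classical
  ext d
  rw [coeff_mul, coeff_genFun, Nat.card_congr (fiberProdEquiv w₁ w₂ d), Nat.card_sigma,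
    ← Finset.sum_coe_sort (antidiagonal d)]
  push_cast [Nat.card_prod]
  rfl

theorem genFun_option_elim (w : α → σ →₀ ℕ) [∀ d, Finite {a // w a = d}] :
    (genFun (fun o : Option α => o.elim 0 w) : MvPowerSeries σ R) = 1 + genFun w := by
  classical
  ext d
  rw [map_add, coeff_one, coeff_genFun, coeff_genFun, add_comm,
    Nat.card_congr (((Equiv.optionEquivSumPUnit.{0} α).subtypeEquiv
      (q := fun c => Sum.elim w (fun _ => 0) c = d) fun o => by cases o <;> rfl).trans
      Equiv.subtypeSum)]
  simp only [Sum.elim_inl, Sum.elim_inr]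
  rw [Nat.card_sum]
  split_ifs with hd
  · subst hd
    simp
  · simp [Ne.symm hd]

end GenFun

theorem MvPowerSeries.monomial_single_add_single {σ R : Type*} [CommSemiring R] (s t : σ)
    (a b : ℕ) :
    (monomial (Finsupp.single s a + Finsupp.single t b) 1 : MvPowerSeries σ R) =
      X s ^ a * X t ^ b := by
  rw [X_pow_eq, X_pow_eq, monomial_mul_monomial, one_mul]

theorem MvPowerSeries.eq_inv_one_sub_of_eq_one_add_mul {σ k : Type*} [Field k]
    {A B : MvPowerSeries σ k} (hB : constantCoeff B = 0) (h : A = 1 + B * A) : A = (1 - B)⁻¹ := by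
  rw [MvPowerSeries.eq_inv_iff_mul_eq_one (by simp [hB])]
  linear_combination h

open DyckStep

def DyckStep.equivBool : DyckStep ≃ Bool where
  toFun s := s = U
  invFun b := if b then U else D
  left_inv s := by cases s <;> rfl
  right_inv b := by cases b <;> rfl

@[simp] theorem DyckStep.equivBool_U : equivBool U = true := rfl
@[simp] theorem DyckStep.equivBool_D : equivBool D = false := rfl

theorem IsDyckPath.count_false {n : ℕ} {p : List Bool} (hp : IsDyckPath n p) :
    p.count false = n := by
  have := List.count_true_add_count_false p
  have := hp.1
  have := hp.2.1
  omega

namespace DyckWord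

def toBools (p : DyckWord) : List Bool := p.toList.map equivBool

theorem isDyckPath_toBools (p : DyckWord) : IsDyckPath p.semilength p.toBools := by
  have hcount (l : List DyckStep) := List.count_map_of_injective l _ equivBool.injective
  refine ⟨by simp [toBools], hcount p.toList U, fun i => ?_⟩
  rw [toBools, ← List.map_take]
  exact (hcount _ D).trans_le <| (p.count_D_le_count_U i).trans_eq (hcount _ U).symm

def ofBools {n : ℕ} (p : List Bool) (hp : IsDyckPath n p) : DyckWord where
  toList := p.map equivBool.symm
  count_U_eq_count_D := by
    change (p.map equivBool.symm).count (equivBool.symm true) =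
      (p.map equivBool.symm).count (equivBool.symm false)
    simp only [List.count_map_of_injective _ _ equivBool.symm.injective]
    rw [hp.2.1, hp.count_false]
  count_D_le_count_U i := by
    rw [← List.map_take]
    change (_ : List _).count (equivBool.symm false) ≤ (_ : List _).count (equivBool.symm true)
    simp only [List.count_map_of_injective _ _ equivBool.symm.injective]
    exact hp.2.2 i

theorem semilength_ofBools {n : ℕ} {p : List Bool} (hp : IsDyckPath n p) :
    (ofBools p hp).semilength = n :=
  (List.count_map_of_injective _ _ equivBool.symm.injective true).trans hp.2.1

theorem toBools_ofBools {n : ℕ} {p : List Bool} (hp : IsDyckPath n p) :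
    (ofBools p hp).toBools = p := by
  simp [toBools, ofBools]

theorem ofBools_toBools (w : DyckWord) : ofBools w.toBools w.isDyckPath_toBools = w := by
  ext1
  simp [toBools, ofBools]

theorem card_isDyckPath_and (n : ℕ) (f : List Bool → Prop) :
    Nat.card {p // IsDyckPath n p ∧ f p} =
      Nat.card {w : DyckWord // w.semilength = n ∧ f w.toBools} :=
  Nat.card_congr
    { toFun p := ⟨ofBools p.1 p.2.1, semilength_ofBools p.2.1,
        (toBools_ofBools p.2.1).symm ▸ p.2.2⟩
      invFun w := ⟨w.1.toBools, by simpa only [w.2.1] using w.1.isDyckPath_toBools, w.2.2⟩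
      left_inv p := Subtype.ext (toBools_ofBools p.2.1)
      right_inv w := Subtype.ext (ofBools_toBools w.1) }

theorem toBools_nest_add (p q : DyckWord) :
    (p.nest + q).toBools = true :: (p.toBools ++ false :: q.toBools) := by
  change List.map _ ([U] ++ p.toList ++ [D] ++ q.toList) = _
  simp [toBools]

def firstReturnEquiv : Option (DyckWord × DyckWord) ≃ DyckWord where
  toFun o := o.elim 0 fun pq => pq.1.nest + pq.2
  invFun w := if w = 0 then none else some (w.insidePart, w.outsidePart)
  left_inv o := by
    rcases o with _ | ⟨p, q⟩
    · simp
    · simp [insidePart_add, outsidePart_add]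
  right_inv w := by
    by_cases hw : w = 0
    · simp [hw]
    · simp [hw, nest_insidePart_add_outsidePart hw]

end DyckWord

/-- Up steps of `l` ending at a height `≡ 0 (mod m)` when `l` starts at height `h`. Heights live
in `ZMod m`, so no truncated subtraction occurs when `l` goes below its start. -/
def upStepsToZero (m : ℕ) : ZMod m → List Bool → ℕ
  | _, [] => 0
  | h, true :: l => (if h + 1 = 0 then 1 else 0) + upStepsToZero m (h + 1) l
  | h, false :: l => upStepsToZero m (h - 1) l

theorem upStepsToZero_append (m : ℕ) (h : ZMod m) (l₁ l₂ : List Bool) :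
    upStepsToZero m h (l₁ ++ l₂) =
      upStepsToZero m h l₁ + upStepsToZero m (h + l₁.count true - l₁.count false) l₂ := by
  induction l₁ generalizing h with
  | nil => simp [upStepsToZero]
  | cons b l ih =>
    cases b <;> simp [upStepsToZero, ih] <;> ring_nf

theorem card_filter_eq_upStepsToZero (m : ℕ) (h : ZMod m) (l : List Bool) :
    ((Finset.range l.length).filter (fun i => l.getD i false = true ∧
      h + (l.take (i + 1)).count true - (l.take (i + 1)).count false = 0)).card =
      upStepsToZero m h l := by
  induction l generalizing h with
  | nil => simp [upStepsToZero]
  | cons b l ih =>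
    rw [Finset.card_filter, List.length_cons, Finset.sum_range_succ']
    cases b
    · have hshift : ∀ a b : ZMod m, h + a - (b + 1) = h - 1 + a - b := fun _ _ => by ring
      rw [upStepsToZero, ← ih, Finset.card_filter]
      simp [List.take_succ_cons, hshift]
    · have hshift : ∀ a b : ZMod m, h + (a + 1) - b = h + 1 + a - b := fun _ _ => by ring
      rw [upStepsToZero, ← ih, Finset.card_filter, add_comm]
      simp [List.take_succ_cons, hshift]

theorem upStepsMod_zero_eq_upStepsToZero (m : ℕ) {n : ℕ} {p : List Bool} (hp : IsDyckPath n p) :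
    upStepsMod m 0 p = upStepsToZero m 0 p := by
  rw [upStepsMod, ← card_filter_eq_upStepsToZero m 0 p]
  refine congrArg Finset.card (Finset.filter_congr fun i _ => and_congr_right fun _ => ?_)
  rw [stepHeight, zero_add, ← Nat.cast_sub (hp.2.2 (i + 1)), ZMod.natCast_eq_zero_iff,
    Nat.dvd_iff_mod_eq_zero]

open DyckWord

noncomputable def dyckWeight (m : ℕ) (h : ZMod m) (w : DyckWord) : Fin 2 →₀ ℕ :=
  Finsupp.single 0 w.semilength + Finsupp.single 1 (upStepsToZero m h w.toBools)

theorem dyckWeight_eq_iff {m : ℕ} {h : ZMod m} {w : DyckWord} {d : Fin 2 →₀ ℕ} :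
    dyckWeight m h w = d ↔ w.semilength = d 0 ∧ upStepsToZero m h w.toBools = d 1 := by
  simp [dyckWeight, Finsupp.ext_iff, Fin.forall_fin_two]

theorem dyckWeight_zero (m : ℕ) (h : ZMod m) : dyckWeight m h 0 = 0 := by
  simp [dyckWeight, show (0 : DyckWord).toBools = [] from rfl, upStepsToZero]

theorem dyckWeight_nest_add (m : ℕ) (h : ZMod m) (p q : DyckWord) :
    dyckWeight m h (p.nest + q) = dyckWeight m (h + 1) p + dyckWeight m h q +
      (Finsupp.single 0 1 + Finsupp.single 1 (if h + 1 = 0 then 1 else 0)) := by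
  have hp := p.isDyckPath_toBools
  simp only [dyckWeight, toBools_nest_add, upStepsToZero, upStepsToZero_append, hp.2.1,
    hp.count_false, semilength_add, semilength_nest, add_sub_cancel_right,
    Finsupp.single_add]
  abel

instance (m : ℕ) (h : ZMod m) (d : Fin 2 →₀ ℕ) : Finite {w // dyckWeight m h w = d} :=
  Finite.of_injective (fun w => (⟨w.1, (dyckWeight_eq_iff.1 w.2).1⟩ :
    {w : DyckWord // w.semilength = d 0})) fun _ _ e => Subtype.ext (by simpa using e)

/-- The series `F_h` of the sketch above. -/
noncomputable def dyckGF (m : ℕ) (h : ZMod m) : MvPowerSeries (Fin 2) ℚ := genFun (dyckWeight m h)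

theorem dyckGF_eq (m : ℕ) (h : ZMod m) :
    dyckGF m h = 1 + X 0 * X 1 ^ (if h + 1 = 0 then 1 else 0) * dyckGF m (h + 1) * dyckGF m h := by
  have hw : dyckWeight m h ∘ firstReturnEquiv = fun o => o.elim 0 fun x =>
      dyckWeight m (h + 1) x.1 + dyckWeight m h x.2 +
        (Finsupp.single 0 1 + Finsupp.single 1 (if h + 1 = 0 then 1 else 0)) := by
    funext o
    rcases o with _ | ⟨p, q⟩
    · exact dyckWeight_zero m h
    · exact dyckWeight_nest_add m h p q
  have := finite_fiber_prod (dyckWeight m (h + 1)) (dyckWeight m h)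
  have := finite_fiber_add_const (fun x : DyckWord × DyckWord =>
    dyckWeight m (h + 1) x.1 + dyckWeight m h x.2)
  calc dyckGF m h = genFun (dyckWeight m h ∘ firstReturnEquiv) := (genFun_comp_equiv _ _).symm
    _ = _ := by
      rw [hw, genFun_option_elim, genFun_add_const, genFun_prod, monomial_single_add_single,
        pow_one, dyckGF, dyckGF]
      ring

theorem dyckGF_eq_inv (m : ℕ) (h : ZMod m) :
    dyckGF m h = (1 - X 0 * X 1 ^ (if h + 1 = 0 then 1 else 0) * dyckGF m (h + 1))⁻¹ :=
  MvPowerSeries.eq_inv_one_sub_of_eq_one_add_mul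
    (by rw [map_mul, map_mul, constantCoeff_X, zero_mul, zero_mul]) (dyckGF_eq m h)

theorem dyckGF_neg_succ_eq_inv_cfDen {m i : ℕ} (hi : i < m) :
    dyckGF m (-(i + 1)) = (cfDen (dyckGF m 0) i)⁻¹ := by
  induction i with
  | zero => simp [dyckGF_eq_inv m (-1), cfDen]
  | succ i ih =>
    have hne : -((i : ZMod m) + 1) ≠ 0 := by
      rw [neg_ne_zero, ← Nat.cast_succ, Ne, ZMod.natCast_eq_zero_iff]
      exact fun hdvd => absurd (Nat.le_of_dvd i.succ_pos hdvd) (by omega)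
    have hsucc : -(((i + 1 : ℕ) : ZMod m) + 1) + 1 = -((i : ZMod m) + 1) := by push_cast; ring
    rw [dyckGF_eq_inv, hsucc, if_neg hne, pow_zero, mul_one, ih (by omega), cfDen]

theorem Gm_eq_dyckGF (m : ℕ) : Gm m = dyckGF m 0 := by
  ext d
  change (Nat.card {p // IsDyckPath (d 0) p ∧ upStepsMod m 0 p = d 1} : ℚ) =
    Nat.card {w // dyckWeight m 0 w = d}
  rw [Nat.card_congr (Equiv.subtypeEquivRight fun p => and_congr_right fun hp => by
    rw [upStepsMod_zero_eq_upStepsToZero m hp]), card_isDyckPath_and,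
    Nat.card_congr (Equiv.subtypeEquivRight fun w => dyckWeight_eq_iff)]

/-- For `m ≥ 2`, the generating function `Gm m` satisfies the `m`-level
continued-fraction equation `Gm m = 1/(1 - x/(1 - x/(⋯/(1 - x·y·(Gm m)))))`,
where only the innermost `x` carries the weight `y`. -/
theorem Gm_continued_fraction (m : ℕ) (hm : 2 ≤ m) :
    Gm m = (cfDen (Gm m) (m - 1))⁻¹ := by
  have hm1 : -(((m - 1 : ℕ) : ZMod m) + 1) = 0 := by
    rw [Nat.cast_sub (by omega)]
    simp
  rw [Gm_eq_dyckGF, ← dyckGF_neg_succ_eq_inv_cfDen (by omega : m - 1 < m), hm1]
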